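/- arXiv:2206.10936 — 2 statements merged into one kernel-verified Lean document; each statement's English description precedes it below -/
import Mathlib

section
/- Let n ≥ 1, let g be a metric field on ℝⁿ, and let Γ, Γ* be Christoffel fields that are dual with respect to g, with associated covariant derivatives ∇ and ∇*. Then for all differentiable vector fields X, Y : ℝⁿ → ℝⁿ, every p ∈ ℝⁿ and every direction vector Z(p) ∈ ℝⁿ of a vector field Z, the directional derivative at p in direction Z(p) of the function q ↦ X(q)ᵀ g(q) Y(q) equals ((∇_Z X)(p))ᵀ g(p) Y(p) + X(p)ᵀ g(p) (∇*_Z Y)(p). -/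
/-!
By the Leibniz rule, `Z(Xᵀ g Y)` is `(∂_Z X)ᵀ g Y + Xᵀ (∂_Z g) Y + Xᵀ g (∂_Z Y)`. Expanding
`∂_Z g_{ij} = Z^k ∂_k g_{ij}` and using duality splits the middle term into
`Z^k X^i Γ_{ki,j} Y^j + Z^k X^i Γ*_{kj,i} Y^j`; after reindexing (and, for the `Γ` term, the
symmetry of `g`) these are exactly the connection terms of `∇_Z X` and `∇*_Z Y`.
-/

open Finset

theorem map_eq_sum_smul_single {ι R M F : Type*} [Fintype ι] [DecidableEq ι] [Semiring R]
    [AddCommMonoid M] [Module R M] [FunLike F (ι → R) M] [LinearMapClass F R (ι → R) M]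
    (f : F) (x : ι → R) : f x = ∑ i, x i • f (Pi.single i 1) := by
  conv_lhs => rw [pi_eq_sum_univ' x]
  simp only [map_sum, map_smul]

theorem fderiv_sum_sum_mul_mul_apply {E ι : Type*} [NormedAddCommGroup E] [NormedSpace ℝ E]
    [Fintype ι] {X Y : E → ι → ℝ} {G : E → Matrix ι ι ℝ} {p : E}
    (hX : DifferentiableAt ℝ X p) (hY : DifferentiableAt ℝ Y p)
    (hG : ∀ i j, DifferentiableAt ℝ (fun q => G q i j) p) (v : E) :
    fderiv ℝ (fun q => ∑ i, ∑ j, X q i * G q i j * Y q j) p v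
      = ∑ i, ∑ j, (fderiv ℝ X p v i * G p i j * Y p j
          + X p i * fderiv ℝ (fun q => G q i j) p v * Y p j
          + X p i * G p i j * fderiv ℝ Y p v j) := by
  simp (disch := fun_prop) only [fderiv_fun_sum, fderiv_fun_mul, fderiv_apply hX, fderiv_apply hY,
    _root_.sum_apply, add_apply, smul_apply, ContinuousLinearMap.comp_apply,
    ContinuousLinearMap.proj_apply, smul_eq_mul]
  exact sum_congr rfl fun i _ => sum_congr rfl fun j _ => by ring

theorem sum_sum_mul_lowered_mul_eq {ι R : Type*} [Fintype ι] [CommSemiring R]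
    (G : Matrix ι ι R) (Γ : ι → ι → ι → R) (v x y : ι → R) :
    ∑ i, ∑ j, x i * (∑ k, v k * ∑ m, G i m * Γ m k j) * y j
      = ∑ i, ∑ j, x i * G i j * ∑ a, ∑ b, Γ j a b * v a * y b := by
  simp only [mul_sum, sum_mul]
  refine sum_congr rfl fun i _ => ?_
  rw [sum_comm_cycle]
  refine sum_congr rfl fun m _ => ?_
  rw [sum_comm]
  exact sum_congr rfl fun k _ => sum_congr rfl fun j _ => by ring

theorem sum_sum_mul_dual_lowered_mul_eq {ι R : Type*} [Fintype ι] [CommSemiring R]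
    {G : Matrix ι ι R} (hG : G.IsSymm) (Γ Γs : ι → ι → ι → R) (v x y : ι → R) :
    ∑ i, ∑ j, x i * (∑ k, v k * ((∑ m, G j m * Γ m k i) + ∑ m, G i m * Γs m k j)) * y j
      = (∑ i, ∑ j, (∑ a, ∑ b, Γ i a b * v a * x b) * G i j * y j)
        + ∑ i, ∑ j, x i * G i j * ∑ a, ∑ b, Γs j a b * v a * y b := by
  simp only [mul_add, add_mul, sum_add_distrib]
  congr 1
  · calc ∑ i, ∑ j, x i * (∑ k, v k * ∑ m, G j m * Γ m k i) * y j
        = ∑ j, ∑ i, y j * (∑ k, v k * ∑ m, G j m * Γ m k i) * x i := by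
          rw [sum_comm]
          exact sum_congr rfl fun j _ => sum_congr rfl fun i _ => by ring
      _ = ∑ j, ∑ i, y j * G j i * ∑ a, ∑ b, Γ i a b * v a * x b :=
          sum_sum_mul_lowered_mul_eq G Γ v y x
      _ = ∑ i, ∑ j, (∑ a, ∑ b, Γ i a b * v a * x b) * G i j * y j := by
          rw [sum_comm]
          exact sum_congr rfl fun i _ => sum_congr rfl fun j _ => by rw [hG.apply]; ring
  · exact sum_sum_mul_lowered_mul_eq G Γs v x y

theorem dual_connections_metric_product_rule_general (n : ℕ)
    (g : (Fin n → ℝ) → Matrix (Fin n) (Fin n) ℝ)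
    (hsymm : ∀ p, (g p).IsSymm)
    (hdiffg : ∀ i j : Fin n, Differentiable ℝ fun p => g p i j)
    (Γ Γs : (Fin n → ℝ) → Fin n → Fin n → Fin n → ℝ)
    (hdual : ∀ (p : Fin n → ℝ) (i j k : Fin n),
      fderiv ℝ (fun q => g q i j) p (Pi.single k 1)
        = (∑ m, g p j m * Γ p m k i) + (∑ m, g p i m * Γs p m k j))
    (X Y Z : (Fin n → ℝ) → Fin n → ℝ)
    (hX : Differentiable ℝ X) (hY : Differentiable ℝ Y)
    (p : Fin n → ℝ) :
    fderiv ℝ (fun q => ∑ i, ∑ j, X q i * g q i j * Y q j) p (Z p)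
      = (∑ i, ∑ j,
          (fderiv ℝ X p (Z p) i + ∑ a, ∑ b, Γ p i a b * Z p a * X p b)
            * g p i j * Y p j)
      + (∑ i, ∑ j,
          X p i * g p i j
            * (fderiv ℝ Y p (Z p) j + ∑ a, ∑ b, Γs p j a b * Z p a * Y p b)) := by
  have hgZ (i j : Fin n) : fderiv ℝ (fun q => g q i j) p (Z p)
      = ∑ k, Z p k * ((∑ m, g p j m * Γ p m k i) + ∑ m, g p i m * Γs p m k j) := by
    simp only [map_eq_sum_smul_single _ (Z p), hdual, smul_eq_mul]
  rw [fderiv_sum_sum_mul_mul_apply (hX p) (hY p) fun i j => hdiffg i j p]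
  simp only [sum_add_distrib, hgZ]
  rw [sum_sum_mul_dual_lowered_mul_eq (hsymm p)]
  simp only [add_mul, mul_add, sum_add_distrib]
  ring

/-- If `Γ` and `Γs` are dual Christoffel fields with respect to the metric
field `g`, with covariant derivatives `∇` and `∇*`, then for differentiable vector fields
`X, Y` and any vector field `Z`,
`Z(g(X,Y))(p) = g(∇_Z X, Y)(p) + g(X, ∇*_Z Y)(p)`, where
`(∇_Z X)(p)^k = (fderiv X p (Z p))^k + ∑_{j,i} Γ^k_{ji}(p) Z(p)^j X(p)^i`. -/
theorem dual_connections_metric_product_rule (n : ℕ) (hn : 1 ≤ n)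
    (g : (Fin n → ℝ) → Matrix (Fin n) (Fin n) ℝ)
    (hsymm : ∀ p, (g p).IsSymm)
    (hpos : ∀ p, (g p).PosDef)
    (hdiffg : ∀ i j : Fin n, Differentiable ℝ fun p => g p i j)
    (Γ Γs : (Fin n → ℝ) → Fin n → Fin n → Fin n → ℝ)
    (hdual : ∀ (p : Fin n → ℝ) (i j k : Fin n),
      fderiv ℝ (fun q => g q i j) p (Pi.single k 1)
        = (∑ m, g p j m * Γ p m k i) + (∑ m, g p i m * Γs p m k j))
    (X Y Z : (Fin n → ℝ) → Fin n → ℝ)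
    (hX : Differentiable ℝ X) (hY : Differentiable ℝ Y)
    (p : Fin n → ℝ) :
    fderiv ℝ (fun q => ∑ i, ∑ j, X q i * g q i j * Y q j) p (Z p)
      = (∑ i, ∑ j,
          (fderiv ℝ X p (Z p) i + ∑ a, ∑ b, Γ p i a b * Z p a * X p b)
            * g p i j * Y p j)
      + (∑ i, ∑ j,
          X p i * g p i j
            * (fderiv ℝ Y p (Z p) j + ∑ a, ∑ b, Γs p j a b * Z p a * Y p b)) :=
  dual_connections_metric_product_rule_general n g hsymm hdiffg Γ Γs hdual X Y Z hX hY p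
end

section
/- Let n ≥ 1, let g be a metric field on ℝⁿ, let Γ, Γ* be Christoffel fields dual with respect to g, with covariant derivatives ∇ and ∇*, let S ⊆ Fin n, and let W be the corresponding coordinate subspace with g-orthogonal projections P(p) and induced covariant derivatives ∇̃, ∇̃*. Then the induced connections are dual with respect to the induced metric: for all differentiable W-valued vector fields X, Y, Z : ℝⁿ → ℝⁿ and every p ∈ ℝⁿ, the directional derivative at p in direction Z(p) of the function q ↦ X(q)ᵀ g(q) Y(q) equals ((∇̃_Z X)(p))ᵀ g(p) Y(p) + X(p)ᵀ g(p) (∇̃*_Z Y)(p). -/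
/-!
Because `X` and `Y` take values in `W` and `v - P v` is `g`-orthogonal to `W`, the projections
drop out of both terms on the right. What remains is the duality of the ambient connections:
by the product rule `Z(g(X, Y)) = g(D_Z X, Y) + Xᵀ (D_Z g) Y + g(X, D_Z Y)`, and the duality
relation says `D_Z g = (g Γ_Z)ᵀ + g Γ*_Z`, which by symmetry of `g` splits the middle term into
`g(Γ_Z X, Y) + g(X, Γ*_Z Y)`.
-/

open Matrix

section
variable {ι : Type*} [Fintype ι]

lemma sum_sum_mul_mul_eq_dotProduct_mulVec {α : Type*} [CommSemiring α] (x y : ι → α)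
    (G : Matrix ι ι α) : ∑ i, ∑ j, x i * G i j * y j = x ⬝ᵥ G *ᵥ y := by
  simp only [dotProduct, mulVec, Finset.mul_sum, mul_assoc]

lemma Matrix.IsSymm.dotProduct_mulVec_comm {α : Type*} [CommSemiring α] {G : Matrix ι ι α}
    (hG : G.IsSymm) (x y : ι → α) : x ⬝ᵥ G *ᵥ y = y ⬝ᵥ G *ᵥ x := by
  conv_lhs => rw [dotProduct_mulVec, ← hG.eq, vecMul_transpose]
  exact dotProduct_comm _ _

lemma Matrix.IsSymm.dotProduct_transpose_mul_add_mul_mulVec {α : Type*} [CommSemiring α]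
    {G : Matrix ι ι α} (hG : G.IsSymm) (A B : Matrix ι ι α) (x y : ι → α) :
    x ⬝ᵥ ((G * A)ᵀ + G * B) *ᵥ y = (A *ᵥ x) ⬝ᵥ G *ᵥ y + x ⬝ᵥ G *ᵥ B *ᵥ y := by
  rw [add_mulVec, dotProduct_add, transpose_mul, hG.eq, ← mulVec_mulVec, ← mulVec_mulVec,
    dotProduct_mulVec x, vecMul_transpose, hG.dotProduct_mulVec_comm (A *ᵥ x)]

/-- `Γ_v` with `(Γ_v)^k_b = ∑_a Γ^k_{ab} v^a`, so that `∇_v X = D_v X + Γ_v X`. -/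
def connectionMatrix (Γ : ι → ι → ι → ℝ) (v : ι → ℝ) : Matrix ι ι ℝ :=
  of fun k b => ∑ a, Γ k a b * v a

lemma connectionMatrix_mulVec_apply (Γ : ι → ι → ι → ℝ) (v x : ι → ℝ) (k : ι) :
    (connectionMatrix Γ v *ᵥ x) k = ∑ a, ∑ b, Γ k a b * v a * x b := by
  simp only [connectionMatrix, mulVec, dotProduct, of_apply, Finset.sum_mul]
  exact Finset.sum_comm

lemma of_eq_transpose_mul_add_mul_of_dual [DecidableEq ι] {G : Matrix ι ι ℝ}
    {A B : ι → ι → ι → ℝ} {Dg : ι → ι → (ι → ℝ) →L[ℝ] ℝ}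
    (hdual : ∀ i j k, Dg i j (Pi.single k 1) = ∑ m, G j m * A m k i + ∑ m, G i m * B m k j)
    (v : ι → ℝ) :
    of (fun i j => Dg i j v) = (G * connectionMatrix A v)ᵀ + G * connectionMatrix B v := by
  ext i j
  conv_lhs => rw [of_apply, pi_eq_sum_univ' v, map_sum]
  simp only [map_smul, hdual, Matrix.add_apply, transpose_apply, mul_apply, connectionMatrix,
    of_apply, smul_eq_mul, mul_add, Finset.sum_add_distrib, Finset.mul_sum]
  congr 1 <;> rw [Finset.sum_comm] <;>
    exact Finset.sum_congr rfl fun _ _ => Finset.sum_congr rfl fun _ _ => by ring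

lemma fderiv_dotProduct_mulVec_apply {E : Type*} [NormedAddCommGroup E] [NormedSpace ℝ E]
    {X Y : E → ι → ℝ} {g : E → Matrix ι ι ℝ} {p : E} (hX : DifferentiableAt ℝ X p)
    (hY : DifferentiableAt ℝ Y p) (hg : ∀ i j, DifferentiableAt ℝ (fun q => g q i j) p) (v : E) :
    fderiv ℝ (fun q => X q ⬝ᵥ g q *ᵥ Y q) p v
      = fderiv ℝ X p v ⬝ᵥ g p *ᵥ Y p
        + X p ⬝ᵥ (of fun i j => fderiv ℝ (fun q => g q i j) p v) *ᵥ Y p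
        + X p ⬝ᵥ g p *ᵥ fderiv ℝ Y p v := by
  have hXi := hasFDerivAt_pi'.mp hX.hasFDerivAt
  have hYj := hasFDerivAt_pi'.mp hY.hasFDerivAt
  have h := HasFDerivAt.fun_sum (u := Finset.univ) fun i _ =>
    HasFDerivAt.fun_sum (u := Finset.univ) fun j _ =>
      ((hXi i).fun_mul (hg i j).hasFDerivAt).fun_mul (hYj j)
  simp only [← sum_sum_mul_mul_eq_dotProduct_mulVec]
  rw [h.fderiv]
  simp only [_root_.sum_apply, _root_.add_apply, _root_.smul_apply,
    ContinuousLinearMap.comp_apply, ContinuousLinearMap.proj_apply, smul_eq_mul, of_apply,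
    ← Finset.sum_add_distrib]
  refine Finset.sum_congr rfl fun i _ => Finset.sum_congr rfl fun j _ => ?_
  ring

end

theorem induced_connections_dual_general (n : ℕ)
    (g : (Fin n → ℝ) → Matrix (Fin n) (Fin n) ℝ)
    (hsymm : ∀ p, (g p).IsSymm)
    (hdiffg : ∀ i j : Fin n, Differentiable ℝ fun p => g p i j)
    (Γ Γs : (Fin n → ℝ) → Fin n → Fin n → Fin n → ℝ)
    (hdual : ∀ (p : Fin n → ℝ) (i j k : Fin n),
      fderiv ℝ (fun q => g q i j) p (Pi.single k 1)
        = (∑ m, g p j m * Γ p m k i) + (∑ m, g p i m * Γs p m k j))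
    (S : Set (Fin n))
    (P : (Fin n → ℝ) → (Fin n → ℝ) →ₗ[ℝ] (Fin n → ℝ))
    -- `v - P p v` is `g(p)`-orthogonal to `W`:
    (hPorth : ∀ (p : Fin n → ℝ) (v w : Fin n → ℝ), (∀ i ∈ S, w i = 0) →
      ∑ i, ∑ j, (v i - P p v i) * g p i j * w j = 0)
    (X Y Z : (Fin n → ℝ) → Fin n → ℝ)
    (hX : Differentiable ℝ X) (hY : Differentiable ℝ Y)
    (hXW : ∀ q, ∀ i ∈ S, X q i = 0)
    (hYW : ∀ q, ∀ i ∈ S, Y q i = 0)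
    (p : Fin n → ℝ) :
    fderiv ℝ (fun q => ∑ i, ∑ j, X q i * g q i j * Y q j) p (Z p)
      = (∑ i, ∑ j,
          P p (fun k => fderiv ℝ X p (Z p) k + ∑ a, ∑ b, Γ p k a b * Z p a * X p b) i
            * g p i j * Y p j)
      + (∑ i, ∑ j,
          X p i * g p i j
            * P p (fun k => fderiv ℝ Y p (Z p) k + ∑ a, ∑ b, Γs p k a b * Z p a * Y p b) j) := by
  have hproj_left : ∀ v w, (∀ i ∈ S, w i = 0) → P p v ⬝ᵥ g p *ᵥ w = v ⬝ᵥ g p *ᵥ w := by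
    intro v w hw
    have h := hPorth p v w hw
    simp only [sub_mul, Finset.sum_sub_distrib, sum_sum_mul_mul_eq_dotProduct_mulVec] at h
    exact (sub_eq_zero.mp h).symm
  have hproj_right : ∀ v w, (∀ i ∈ S, w i = 0) → w ⬝ᵥ g p *ᵥ P p v = w ⬝ᵥ g p *ᵥ v := by
    intro v w hw
    rw [(hsymm p).dotProduct_mulVec_comm, hproj_left v w hw, (hsymm p).dotProduct_mulVec_comm]
  simp only [sum_sum_mul_mul_eq_dotProduct_mulVec, ← connectionMatrix_mulVec_apply,
    ← Pi.add_apply]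
  rw [fderiv_dotProduct_mulVec_apply (hX p) (hY p) (fun i j => hdiffg i j p),
    of_eq_transpose_mul_add_mul_of_dual (hdual p), hproj_left _ _ (hYW p),
    hproj_right _ _ (hXW p),
    (hsymm p).dotProduct_transpose_mul_add_mul_mulVec, add_dotProduct, mulVec_add, dotProduct_add]
  ring

/-- Let `Γ, Γs` be Christoffel fields dual with respect to the metric field
`g`, let `W = {v : v i = 0 for i ∈ S}` be a coordinate subspace, and let `P p` be the
`g(p)`-orthogonal projection onto `W`. Then the induced connections
`(∇̃_Z X)(p) = P p ((∇_Z X)(p))` and `(∇̃*_Z Y)(p) = P p ((∇*_Z Y)(p))`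
are dual with respect to the induced metric: for all differentiable `W`-valued vector
fields `X, Y, Z` and every `p`,
`Z(g(X,Y))(p) = g(∇̃_Z X, Y)(p) + g(X, ∇̃*_Z Y)(p)`. -/
theorem induced_connections_dual (n : ℕ) (hn : 1 ≤ n)
    (g : (Fin n → ℝ) → Matrix (Fin n) (Fin n) ℝ)
    (hsymm : ∀ p, (g p).IsSymm)
    (hpos : ∀ p, (g p).PosDef)
    (hdiffg : ∀ i j : Fin n, Differentiable ℝ fun p => g p i j)
    (Γ Γs : (Fin n → ℝ) → Fin n → Fin n → Fin n → ℝ)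
    (hdual : ∀ (p : Fin n → ℝ) (i j k : Fin n),
      fderiv ℝ (fun q => g q i j) p (Pi.single k 1)
        = (∑ m, g p j m * Γ p m k i) + (∑ m, g p i m * Γs p m k j))
    (S : Set (Fin n))
    (P : (Fin n → ℝ) → (Fin n → ℝ) →ₗ[ℝ] (Fin n → ℝ))
    -- `P p` maps into `W`:
    (hPW : ∀ (p : Fin n → ℝ) (v : Fin n → ℝ), ∀ i ∈ S, P p v i = 0)
    -- `P p` fixes `W`:
    (hPid : ∀ (p : Fin n → ℝ) (w : Fin n → ℝ), (∀ i ∈ S, w i = 0) → P p w = w)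
    -- `v - P p v` is `g(p)`-orthogonal to `W`:
    (hPorth : ∀ (p : Fin n → ℝ) (v w : Fin n → ℝ), (∀ i ∈ S, w i = 0) →
      ∑ i, ∑ j, (v i - P p v i) * g p i j * w j = 0)
    (X Y Z : (Fin n → ℝ) → Fin n → ℝ)
    (hX : Differentiable ℝ X) (hY : Differentiable ℝ Y) (hZ : Differentiable ℝ Z)
    (hXW : ∀ q, ∀ i ∈ S, X q i = 0)
    (hYW : ∀ q, ∀ i ∈ S, Y q i = 0)
    (hZW : ∀ q, ∀ i ∈ S, Z q i = 0)
    (p : Fin n → ℝ) :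
    fderiv ℝ (fun q => ∑ i, ∑ j, X q i * g q i j * Y q j) p (Z p)
      = (∑ i, ∑ j,
          P p (fun k => fderiv ℝ X p (Z p) k + ∑ a, ∑ b, Γ p k a b * Z p a * X p b) i
            * g p i j * Y p j)
      + (∑ i, ∑ j,
          X p i * g p i j
            * P p (fun k => fderiv ℝ Y p (Z p) k + ∑ a, ∑ b, Γs p k a b * Z p a * Y p b) j) :=
  induced_connections_dual_general n g hsymm hdiffg Γ Γs hdual S P hPorth X Y Z hX hY hXW hYW p
end
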